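/- arXiv:2102.00494 — 2 statements merged into one kernel-verified Lean document; each statement's English description precedes it below -/
import Mathlib

section
/- Let R be a commutative ring. Let Υ : Seg_w → R[x_1,…,x_n] be such that every Υ(b) is supported in tar' and X^{b*}·Υ(b) = X^{b}·Υ(b*) for every b ∈ Seg_w. Let Υ̂ : Seg_w ∪ S_D → R[x_1,…,x_n] agree with Υ on Seg_w and satisfy Υ̂(m′ + b) = trunc_s(X^{m′}·Υ(b)) whenever b ∈ Seg_w and m′ is a (δ+1)-monomial with 1 ≤ deg m′ ≤ s−r. Set X₀ = 1 and e₀ = 0. Then for all b₁, b₂ ∈ Seg_w ∪ S_D and all α, β ∈ {0} ∪ {δ+1, …, n} with at most one of α, β equal to 0, if e_α + b₁ = e_β + b₂ then X_α·Υ̂(b₁) − X_β·Υ̂(b₂) lies in the R-span of the monomials X^m with m ∈ ∂O and deg m = s+1; moreover, if both α ≥ δ+1 and β ≥ δ+1 then X_α·Υ̂(b₁) = X_β·Υ̂(b₂). -/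
open MvPolynomial
open scoped Classical

noncomputable section

/-- Total degree of an exponent vector `m : Fin n →₀ ℕ`. -/
def mdeg {n : ℕ} (m : Fin n →₀ ℕ) : ℕ := ∑ k, m k

/-- `m` is a δ-monomial: all exponents of variables strictly before `δ` vanish. -/
def IsDeltaMon {n : ℕ} (δ : Fin n) (m : Fin n →₀ ℕ) : Prop := ∀ k < δ, m k = 0

/-- `m` is a (δ+1)-monomial: all exponents of variables up to and including `δ` vanish. -/
def IsSuccDeltaMon {n : ℕ} (δ : Fin n) (m : Fin n →₀ ℕ) : Prop := ∀ k ≤ δ, m k = 0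

/-- The order ideal `O(n,r,s,δ,w)`. -/
def OIdeal {n : ℕ} (r s w : ℕ) (δ : Fin n) : Set (Fin n →₀ ℕ) :=
  {m | mdeg m < r ∨ (IsDeltaMon δ m ∧ r ≤ mdeg m ∧ mdeg m ≤ s ∧ m δ + w + 1 ≤ r)}

/-- The border `∂O`. -/
def Border {n : ℕ} (r s w : ℕ) (δ : Fin n) : Set (Fin n →₀ ℕ) :=
  {m | m ∉ OIdeal r s w δ ∧
    ∃ (α : Fin n) (t : Fin n →₀ ℕ), t ∈ OIdeal r s w δ ∧ m = Finsupp.single α 1 + t}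

/-- The set `S_D` of "diagonal" border monomials. -/
def SD {n : ℕ} (r s w : ℕ) (δ : Fin n) : Set (Fin n →₀ ℕ) :=
  {m | m ∈ Border r s w δ ∧ IsDeltaMon δ m ∧ r + 1 ≤ mdeg m ∧ mdeg m ≤ s}

/-- The set `S_L` of "leading" monomials. -/
def SL {n : ℕ} (r w : ℕ) (δ : Fin n) : Set (Fin n →₀ ℕ) :=
  {m | IsDeltaMon δ m ∧ mdeg m = r ∧ r - w ≤ m δ}

/-- `tar = {m ∈ O : r ≤ deg m ≤ s}`. -/
def Tar {n : ℕ} (r s w : ℕ) (δ : Fin n) : Set (Fin n →₀ ℕ) :=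
  {m | m ∈ OIdeal r s w δ ∧ r ≤ mdeg m ∧ mdeg m ≤ s}

/-- `tar' = {m ∈ tar : deg m ≤ s−1}`. -/
def Tar' {n : ℕ} (r s w : ℕ) (δ : Fin n) : Set (Fin n →₀ ℕ) :=
  {m | m ∈ Tar r s w δ ∧ mdeg m ≤ s - 1}

/-- `tar'' = {m ∈ tar' : m_{δ+1} ≥ w}` (`δ'` is the index of `x_{δ+1}`). -/
def Tar'' {n : ℕ} (r s w : ℕ) (δ δ' : Fin n) : Set (Fin n →₀ ℕ) :=
  {m | m ∈ Tar' r s w δ ∧ w ≤ m δ'}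

/-- `trailmon = {m ∈ O : deg m = s}`. -/
def Trail {n : ℕ} (r s w : ℕ) (δ : Fin n) : Set (Fin n →₀ ℕ) :=
  {m | m ∈ OIdeal r s w δ ∧ mdeg m = s}

/-- `leadmon = {m : deg m = r, m ∉ O}`. -/
def Lead {n : ℕ} (r s w : ℕ) (δ : Fin n) : Set (Fin n →₀ ℕ) :=
  {m | mdeg m = r ∧ m ∉ OIdeal r s w δ}

/-- `Seg_a`: δ-monomials of degree `r` with `x_δ`-exponent `r − a`. -/
def SegA {n : ℕ} (r a : ℕ) (δ : Fin n) : Set (Fin n →₀ ℕ) :=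
  {b | IsDeltaMon δ b ∧ mdeg b = r ∧ b δ = r - a}

/-- The monomial `x_δ^{r−a}·x_{δ+1}^{a}` (`δ'` is the index of `x_{δ+1}`). -/
def bstar {n : ℕ} (r a : ℕ) (δ δ' : Fin n) : Fin n →₀ ℕ :=
  Finsupp.single δ (r - a) + Finsupp.single δ' a

/-- Truncation: sum of homogeneous components of degree `0` through `s`. -/
def truncLE {n : ℕ} {R : Type*} [CommRing R] (s : ℕ) (P : MvPolynomial (Fin n) R) :
    MvPolynomial (Fin n) R :=
  ∑ m ∈ P.support.filter (fun m => mdeg m ≤ s), monomial m (coeff m P)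

/-- `optX R none = 1 = X₀`, `optX R (some a) = X a`. -/
def optX {n : ℕ} (R : Type*) [CommRing R] : Option (Fin n) → MvPolynomial (Fin n) R
  | none => 1
  | some a => X a

/-- `optE none = 0 = e₀`, `optE (some a) = e_a`. -/
def optE {n : ℕ} : Option (Fin n) → (Fin n →₀ ℕ)
  | none => 0
  | some a => Finsupp.single a 1

/-- The reduction operator determined by a target function `UpsD` on `S_D`. -/
def redFn {n : ℕ} {R : Type*} [CommRing R] (r s w : ℕ) (δ : Fin n)
    (UpsD : (Fin n →₀ ℕ) → MvPolynomial (Fin n) R) (P : MvPolynomial (Fin n) R) :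
    MvPolynomial (Fin n) R :=
  (∑ m ∈ P.support.filter (fun m => m ∈ Tar r s w δ), monomial m (coeff m P)) -
  ∑ m ∈ P.support.filter (fun m => m ∈ SD r s w δ), coeff m P • UpsD m

/-- The polynomial ring over `K` in the distinguished indeterminates `C_{(t,b)}`
and the modification indeterminates `θ_m`. -/
abbrev BigA (K : Type*) [Field K] {n : ℕ} (r s w : ℕ) (δ δ' : Fin n) : Type _ :=
  MvPolynomial ((↥(Trail r s w δ) × ↥(Lead r s w δ)) ⊕ ↥(Tar'' r s w δ δ')) K

/-- The generic linear combination `N_b = Σ_t C_{(t,b)}·X^t` for `b ∈ leadmon`, `0` otherwise. -/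
def NB (K : Type*) [Field K] {n : ℕ} (r s w : ℕ) (δ δ' : Fin n) (b : Fin n →₀ ℕ) :
    MvPolynomial (Fin n) (BigA K r s w δ δ') :=
  if hb : b ∈ Lead r s w δ then
    ∑ᶠ t : ↥(Trail r s w δ),
      monomial (t : Fin n →₀ ℕ)
        (MvPolynomial.X (Sum.inl (t, ⟨b, hb⟩)) : BigA K r s w δ δ')
  else 0


/-!
Every `b ∈ Seg_w ∪ S_D` factors as `b = m' + c` with `c ∈ Seg_w` and `m'` a (δ+1)-monomial
(a monomial of `S_D` has exactly `r − w` factors `x_δ`), and then `Υ̂(b) = trunc_s(X^{m'}·Υ(c))`.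
Pivoting through `b*` and cancelling the regular element `X^{b*}`, the compatibility condition
gives `X^{c₂}·Υ(c₁) = X^{c₁}·Υ(c₂)` for all `c₁, c₂ ∈ Seg_w`. Hence `X_α·Υ̂(b₁)` and `X_β·Υ̂(b₂)`
are truncations, in degree `s` or `s + 1`, of one polynomial `Q = X^{e_α + m₁}·Υ(c₁)`. They agree
when `α, β ≥ δ + 1`; otherwise they differ by the degree-`(s+1)` part of `Q`, whose monomials are
(δ+1)-monomials times monomials of `tar'`, and every such monomial of degree `s + 1` lies in `∂O`.
-/

section Monomials

variable {σ R : Type*} [CommRing R]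

theorem monomial_one_mul_swap_of_pivot {S : Set (σ →₀ ℕ)} {B : σ →₀ ℕ}
    {F : (σ →₀ ℕ) → MvPolynomial σ R} (hB : ∀ c ∈ S, monomial B 1 * F c = monomial c 1 * F B)
    {c₁ c₂ : σ →₀ ℕ} (h₁ : c₁ ∈ S) (h₂ : c₂ ∈ S) :
    monomial c₂ (1 : R) * F c₁ = monomial c₁ 1 * F c₂ := by
  rw [← monomial_one_mul_cancel_left_iff (m := B)]
  calc monomial B 1 * (monomial c₂ 1 * F c₁)
      = monomial c₂ 1 * (monomial B 1 * F c₁) := by ring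
    _ = monomial c₁ 1 * (monomial c₂ 1 * F B) := by rw [hB c₁ h₁]; ring
    _ = monomial B 1 * (monomial c₁ 1 * F c₂) := by rw [← hB c₂ h₂]; ring

theorem monomial_one_mul_eq_of_add_eq {a₁ a₂ c₁ c₂ : σ →₀ ℕ} {P₁ P₂ : MvPolynomial σ R}
    (h : monomial c₂ 1 * P₁ = monomial c₁ 1 * P₂) (hadd : a₁ + c₁ = a₂ + c₂) :
    monomial a₁ 1 * P₁ = monomial a₂ 1 * P₂ := by
  rw [← monomial_one_mul_cancel_left_iff (m := c₂)]
  calc monomial c₂ 1 * (monomial a₁ 1 * P₁)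
      = monomial a₁ 1 * (monomial c₂ 1 * P₁) := by ring
    _ = monomial (a₁ + c₁) 1 * P₂ := by rw [h, ← mul_assoc, monomial_mul, one_mul]
    _ = monomial c₂ 1 * (monomial a₂ 1 * P₂) := by
      rw [← mul_assoc, monomial_mul, one_mul, hadd, add_comm c₂]

end Monomials

section Truncation

variable {n : ℕ} {R : Type*} [CommRing R]

theorem mdeg_eq_degree (m : Fin n →₀ ℕ) : mdeg m = m.degree := (Finsupp.degree_eq_sum m).symm

theorem coeff_truncLE (s : ℕ) (P : MvPolynomial (Fin n) R) (m : Fin n →₀ ℕ) :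
    coeff m (truncLE s P) = if mdeg m ≤ s then coeff m P else 0 := by
  simp only [truncLE, coeff_sum, coeff_monomial, Finset.sum_ite_eq', Finset.mem_filter,
    mem_support_iff]
  by_cases h : coeff m P = 0 <;> simp [h]

theorem truncLE_eq_self {s : ℕ} {P : MvPolynomial (Fin n) R}
    (h : ∀ m ∈ P.support, mdeg m ≤ s) : truncLE s P = P := by
  ext m
  rw [coeff_truncLE]
  split_ifs with hm
  · rfl
  · exact (notMem_support_iff.mp fun hmem => hm (h m hmem)).symm

theorem monomial_one_mul_truncLE (e : Fin n →₀ ℕ) (s : ℕ) (P : MvPolynomial (Fin n) R) :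
    monomial e 1 * truncLE s P = truncLE (s + mdeg e) (monomial e 1 * P) := by
  ext m
  simp only [coeff_monomial_mul', coeff_truncLE, one_mul]
  by_cases he : e ≤ m
  · have hdeg : mdeg (m - e) + mdeg e = mdeg m := by
      simp only [mdeg_eq_degree, ← map_add, tsub_add_cancel_of_le he]
    simp only [he, if_true]
    split_ifs <;> first | rfl | omega
  · simp [he]

theorem truncLE_succ_sub_truncLE (s : ℕ) (P : MvPolynomial (Fin n) R) :
    truncLE (s + 1) P - truncLE s P = homogeneousComponent (s + 1) P := by
  ext m
  simp only [coeff_sub, coeff_truncLE, coeff_homogeneousComponent, ← mdeg_eq_degree]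
  split_ifs <;> first | omega | simp

end Truncation

section OrderIdeal

variable {n : ℕ} {r s w : ℕ} {δ : Fin n}

theorem IsSuccDeltaMon.mono {m m' : Fin n →₀ ℕ} (hm : IsSuccDeltaMon δ m) (hle : m' ≤ m) :
    IsSuccDeltaMon δ m' :=
  fun k hk => Nat.eq_zero_of_le_zero (hm k hk ▸ hle k)

theorem isSuccDeltaMon_erase {b : Fin n →₀ ℕ} (hb : IsDeltaMon δ b) :
    IsSuccDeltaMon δ (b.erase δ) := by
  intro k hk
  rcases hk.lt_or_eq with h | rfl
  · rw [Finsupp.erase_ne h.ne, hb k h]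
  · exact Finsupp.erase_same

theorem mem_OIdeal_iff_of_le {m : Fin n →₀ ℕ} (h : r ≤ mdeg m) :
    m ∈ OIdeal r s w δ ↔ IsDeltaMon δ m ∧ mdeg m ≤ s ∧ m δ + w + 1 ≤ r := by
  simp only [OIdeal, Set.mem_ofPred_eq, not_lt.mpr h, false_or, and_iff_right h]

theorem add_mem_Border {M t : Fin n →₀ ℕ} (hM : IsSuccDeltaMon δ M) (ht : t ∈ Tar' r s w δ)
    (hdeg : mdeg (M + t) = s + 1) : M + t ∈ Border r s w δ := by
  obtain ⟨⟨htO, hrt, -⟩, hts⟩ := ht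
  obtain ⟨htδ, -, htw⟩ := (mem_OIdeal_iff_of_le hrt).mp htO
  have hdeg' : mdeg M + mdeg t = s + 1 := by simpa only [mdeg_eq_degree, map_add] using hdeg
  obtain ⟨γ, hγ⟩ : M.support.Nonempty := by
    rw [Finsupp.support_nonempty_iff]
    rintro rfl
    simp only [mdeg_eq_degree, map_zero] at hdeg' hts
    omega
  have hγM := Finsupp.mem_support_iff.mp hγ
  have hδγ : δ < γ := lt_of_not_ge fun h => hγM (hM γ h)
  obtain ⟨M', rfl⟩ :=
    le_iff_exists_add.mp (Finsupp.single_le_iff.mpr (Nat.one_le_iff_ne_zero.mpr hγM))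
  have hM' : IsSuccDeltaMon δ M' := hM.mono le_add_self
  have hdegM' : mdeg (M' + t) = s := by
    simp only [mdeg_eq_degree, map_add, Finsupp.degree_single] at hdeg' ⊢
    omega
  refine ⟨fun hO => ?_, γ, M' + t, ?_, add_assoc _ _ _⟩
  · have := ((mem_OIdeal_iff_of_le (by omega)).mp hO).2.1
    omega
  · refine (mem_OIdeal_iff_of_le (by omega)).mpr ⟨fun k hk => ?_, hdegM'.le, ?_⟩
    · simp [hM' k hk.le, htδ k hk]
    · simpa [hM' δ le_rfl] using htw

theorem apply_add_eq_of_mem_SD {b : Fin n →₀ ℕ} (hb : b ∈ SD r s w δ) : b δ + w = r := by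
  obtain ⟨⟨hbO, α, t, htO, rfl⟩, hbmon, hbr, hbs⟩ := hb
  have hdeg : mdeg (Finsupp.single α 1 + t) = mdeg t + 1 := by
    simp only [mdeg_eq_degree, map_add, Finsupp.degree_single, add_comm]
  obtain ⟨-, -, htw⟩ := (mem_OIdeal_iff_of_le (by omega)).mp htO
  have hbw : ¬ (Finsupp.single α 1 + t : Fin n →₀ ℕ) δ + w + 1 ≤ r := fun h =>
    hbO ((mem_OIdeal_iff_of_le (by omega)).mpr ⟨hbmon, hbs, h⟩)
  have hbδ : (Finsupp.single α 1 + t : Fin n →₀ ℕ) δ ≤ t δ + 1 := by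
    simp only [Finsupp.add_apply, Finsupp.single_apply]
    split_ifs <;> omega
  omega

theorem exists_add_mem_SegA_of_mem_SD {b : Fin n →₀ ℕ} (hb : b ∈ SD r s w δ) :
    ∃ m' c, IsSuccDeltaMon δ m' ∧ c ∈ SegA r w δ ∧ b = m' + c := by
  have hbδ := apply_add_eq_of_mem_SD hb
  obtain ⟨-, hbmon, hbr, -⟩ := hb
  have herase := isSuccDeltaMon_erase hbmon
  have hsplit := Finsupp.single_add_erase δ b
  have hdeg : mdeg (b.erase δ) + b δ = mdeg b := by
    conv_rhs => rw [← hsplit]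
    simp only [mdeg_eq_degree, map_add, Finsupp.degree_single, add_comm]
  obtain ⟨g, hg, hgdeg⟩ :=
    Finsupp.exists_le_degree_eq (b.erase δ) w (by rw [← mdeg_eq_degree]; omega)
  obtain ⟨m', hm'⟩ := le_iff_exists_add.mp hg
  have hg₀ := herase.mono hg
  refine ⟨m', Finsupp.single δ (b δ) + g, herase.mono (hm' ▸ le_add_self), ⟨?_, ?_, ?_⟩, ?_⟩
  · intro k hk
    simp [hk.ne', hg₀ k hk.le]
  · simp only [mdeg_eq_degree, map_add, Finsupp.degree_single, hgdeg]
    omega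
  · simp only [Finsupp.add_apply, Finsupp.single_eq_same, hg₀ δ le_rfl]
    omega
  · rw [add_left_comm, add_comm m', ← hm', hsplit]

end OrderIdeal

section TargetFunction

variable {n : ℕ} {R : Type*} [CommRing R] {r s w : ℕ} {δ : Fin n}

theorem homogeneousComponent_monomial_one_mul_mem_span {A : Fin n →₀ ℕ}
    (hA : IsSuccDeltaMon δ A) {G : MvPolynomial (Fin n) R}
    (hG : (G.support : Set (Fin n →₀ ℕ)) ⊆ Tar' r s w δ) :
    homogeneousComponent (s + 1) (monomial A 1 * G) ∈
      Submodule.span R ((fun m => (monomial m (1 : R) : MvPolynomial (Fin n) R)) ''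
        {m | m ∈ Border r s w δ ∧ mdeg m = s + 1}) := by
  rw [← restrictSupport_eq_span, mem_restrictSupport_iff]
  intro m hm
  have hcoeff := mem_support_iff.mp hm
  rw [coeff_homogeneousComponent, ← mdeg_eq_degree, coeff_monomial_mul', one_mul] at hcoeff
  split_ifs at hcoeff with hdeg hAm
  · have hmA : A + (m - A) = m := add_tsub_cancel_of_le hAm
    have hBorder := add_mem_Border hA (hG (mem_support_iff.mpr hcoeff)) (by rwa [hmA])
    exact ⟨hmA ▸ hBorder, hdeg⟩
  all_goals exact absurd rfl hcoeff

theorem exists_upsHat_eq_truncLE {Ups UpsHat : (Fin n →₀ ℕ) → MvPolynomial (Fin n) R}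
    (hsupp : ∀ b ∈ SegA r w δ, ((Ups b).support : Set (Fin n →₀ ℕ)) ⊆ Tar' r s w δ)
    (hagree : ∀ b ∈ SegA r w δ, UpsHat b = Ups b)
    (hdef : ∀ b ∈ SegA r w δ, ∀ m' : Fin n →₀ ℕ, IsSuccDeltaMon δ m' →
      1 ≤ mdeg m' → mdeg m' ≤ s - r →
      UpsHat (m' + b) = truncLE s (monomial m' (1 : R) * Ups b))
    {b : Fin n →₀ ℕ} (hb : b ∈ SegA r w δ ∪ SD r s w δ) :
    ∃ m' c, IsSuccDeltaMon δ m' ∧ c ∈ SegA r w δ ∧ b = m' + c ∧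
      UpsHat b = truncLE s (monomial m' 1 * Ups c) := by
  rcases hb with hb | hb
  · refine ⟨0, b, fun _ _ => rfl, hb, (zero_add b).symm, ?_⟩
    rw [hagree b hb, monomial_zero', C_1, one_mul, truncLE_eq_self]
    exact fun m hm => (hsupp b hb hm).1.2.2
  · obtain ⟨m', c, hm', hc, rfl⟩ := exists_add_mem_SegA_of_mem_SD hb
    have hdeg : mdeg m' + r = mdeg (m' + c) := by
      simp only [mdeg_eq_degree, map_add, ← hc.2.1]
    obtain ⟨-, -, hbr, hbs⟩ := hb
    exact ⟨m', c, hm', hc, rfl, hdef c hc m' hm' (by omega) (by omega)⟩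

theorem optX_eq_monomial (γ : Option (Fin n)) : optX R γ = monomial (optE γ) 1 := by
  cases γ <;> simp [optX, optE, X]

theorem mdeg_optE_none : mdeg (optE (none : Option (Fin n))) = 0 := by
  simp [optE, mdeg_eq_degree]

theorem mdeg_optE_some (a : Fin n) : mdeg (optE (some a)) = 1 := by
  simp [optE, mdeg_eq_degree]

theorem IsSuccDeltaMon.optE_add {γ : Option (Fin n)} (hγ : ∀ a, γ = some a → δ < a)
    {m : Fin n →₀ ℕ} (hm : IsSuccDeltaMon δ m) : IsSuccDeltaMon δ (optE γ + m) := by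
  intro k hk
  cases γ with
  | none => simp [optE, hm k hk]
  | some a => simp [optE, hm k hk, (hk.trans_lt (hγ a rfl)).ne']

end TargetFunction

theorem statement9_general (R : Type*) [CommRing R] (n r s w : ℕ) (δ : Fin n)
    (hδ : (δ : ℕ) + 1 < n)
    (Ups UpsHat : (Fin n →₀ ℕ) → MvPolynomial (Fin n) R)
    (hsupp : ∀ b ∈ SegA r w δ, ((Ups b).support : Set (Fin n →₀ ℕ)) ⊆ Tar' r s w δ)
    (hcomp : ∀ b ∈ SegA r w δ,
      monomial (bstar r w δ ⟨(δ : ℕ) + 1, hδ⟩) (1 : R) * Ups b =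
        monomial b (1 : R) * Ups (bstar r w δ ⟨(δ : ℕ) + 1, hδ⟩))
    (hagree : ∀ b ∈ SegA r w δ, UpsHat b = Ups b)
    (hdef : ∀ b ∈ SegA r w δ, ∀ m' : Fin n →₀ ℕ, IsSuccDeltaMon δ m' →
      1 ≤ mdeg m' → mdeg m' ≤ s - r →
      UpsHat (m' + b) = truncLE s (monomial m' (1 : R) * Ups b)) :
    ∀ b₁ ∈ SegA r w δ ∪ SD r s w δ, ∀ b₂ ∈ SegA r w δ ∪ SD r s w δ,
      ∀ α β : Option (Fin n),
        (∀ a, α = some a → δ < a) → (∀ a, β = some a → δ < a) →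
        ¬(α = none ∧ β = none) →
        optE α + b₁ = optE β + b₂ →
        (optX R α * UpsHat b₁ - optX R β * UpsHat b₂ ∈
          Submodule.span R ((fun m => (monomial m (1 : R) : MvPolynomial (Fin n) R)) ''
            {m | m ∈ Border r s w δ ∧ mdeg m = s + 1})) ∧
        ((α ≠ none ∧ β ≠ none) → optX R α * UpsHat b₁ = optX R β * UpsHat b₂) := by
  intro b₁ hb₁ b₂ hb₂ α β hα _ _ heq
  obtain ⟨m₁, c₁, hm₁, hc₁, rfl, hU₁⟩ := exists_upsHat_eq_truncLE hsupp hagree hdef hb₁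
  obtain ⟨m₂, c₂, -, hc₂, rfl, hU₂⟩ := exists_upsHat_eq_truncLE hsupp hagree hdef hb₂
  set Q := monomial (optE α + m₁) (1 : R) * Ups c₁
  have hQ : monomial (optE β + m₂) 1 * Ups c₂ = Q :=
    (monomial_one_mul_eq_of_add_eq (monomial_one_mul_swap_of_pivot hcomp hc₁ hc₂)
      (by simpa only [add_assoc] using heq)).symm
  have hL : optX R α * UpsHat (m₁ + c₁) = truncLE (s + mdeg (optE α)) Q := by
    rw [hU₁, optX_eq_monomial, monomial_one_mul_truncLE, ← mul_assoc, monomial_mul, one_mul]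
  have hR : optX R β * UpsHat (m₂ + c₂) = truncLE (s + mdeg (optE β)) Q := by
    rw [hU₂, optX_eq_monomial, monomial_one_mul_truncLE, ← mul_assoc, monomial_mul, one_mul, hQ]
  have hspan := homogeneousComponent_monomial_one_mul_mem_span (hm₁.optE_add hα) (hsupp c₁ hc₁)
  rw [hL, hR]
  rcases α with _ | a <;> rcases β with _ | b <;>
    simp only [mdeg_optE_none, mdeg_optE_some, add_zero, ne_eq, not_true_eq_false,
      and_false, IsEmpty.forall_iff, and_true, sub_self, reduceCtorEq,
      not_false_eq_true, implies_true]
  · exact zero_mem _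
  · rw [← neg_sub, truncLE_succ_sub_truncLE]
    exact neg_mem hspan
  · rw [truncLE_succ_sub_truncLE]
    exact hspan
  · exact zero_mem _

/-- compatibility of the Step-2 target function on `Seg_w ∪ S_D`. -/
theorem statement9 (R : Type*) [CommRing R] (n r s w : ℕ) (δ : Fin n)
    (hn : 2 ≤ n) (hr : 2 ≤ r) (hrs : r < s) (hδ : (δ : ℕ) + 1 < n) (hw : w + 1 ≤ r)
    (Ups UpsHat : (Fin n →₀ ℕ) → MvPolynomial (Fin n) R)
    (hsupp : ∀ b ∈ SegA r w δ, ((Ups b).support : Set (Fin n →₀ ℕ)) ⊆ Tar' r s w δ)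
    (hcomp : ∀ b ∈ SegA r w δ,
      monomial (bstar r w δ ⟨(δ : ℕ) + 1, hδ⟩) (1 : R) * Ups b =
        monomial b (1 : R) * Ups (bstar r w δ ⟨(δ : ℕ) + 1, hδ⟩))
    (hagree : ∀ b ∈ SegA r w δ, UpsHat b = Ups b)
    (hdef : ∀ b ∈ SegA r w δ, ∀ m' : Fin n →₀ ℕ, IsSuccDeltaMon δ m' →
      1 ≤ mdeg m' → mdeg m' ≤ s - r →
      UpsHat (m' + b) = truncLE s (monomial m' (1 : R) * Ups b)) :
    ∀ b₁ ∈ SegA r w δ ∪ SD r s w δ, ∀ b₂ ∈ SegA r w δ ∪ SD r s w δ,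
      ∀ α β : Option (Fin n),
        (∀ a, α = some a → δ < a) → (∀ a, β = some a → δ < a) →
        ¬(α = none ∧ β = none) →
        optE α + b₁ = optE β + b₂ →
        (optX R α * UpsHat b₁ - optX R β * UpsHat b₂ ∈
          Submodule.span R ((fun m => (monomial m (1 : R) : MvPolynomial (Fin n) R)) ''
            {m | m ∈ Border r s w δ ∧ mdeg m = s + 1})) ∧
        ((α ≠ none ∧ β ≠ none) → optX R α * UpsHat b₁ = optX R β * UpsHat b₂) :=
  statement9_general R n r s w δ hδ Ups UpsHat hsupp hcomp hagree hdef
end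
end

section
/- Let R be a commutative ring and fix an integer a with 0 ≤ a ≤ w. Let Seg_a = {δ-monomials b : deg b = r and b_δ = r−a}. Let Υ : Seg_a → R[x_1,…,x_n] be such that every Υ(b) is supported in tar' and such that whenever b, b′ ∈ Seg_a and δ+1 ≤ α, β ≤ n satisfy e_α + b = e_β + b′, one has X_α·Υ(b) = X_β·Υ(b′). Let Υ_D : S_D → R[x_1,…,x_n] satisfy: whenever m, m′ ∈ S_D and δ+1 ≤ α, β ≤ n with e_α + m = e_β + m′, then X_α·Υ_D(m) = X_β·Υ_D(m′). For P ∈ R[x_1,…,x_n] define red(P) = Σ_{m ∈ supp(P) ∩ tar} (coefficient of X^m in P)·X^m − Σ_{m ∈ supp(P) ∩ S_D} (coefficient of X^m in P)·Υ_D(m). Then: (1) whenever b, b′ ∈ Seg_a and δ+1 ≤ α, β ≤ n satisfy e_α + b = e_β + b′, one has X_α·red(X_δ·Υ(b)) = X_β·red(X_δ·Υ(b′)); and (2) if b, b′ ∈ Seg_a are connected by a path c₀ = b, c₁, …, c_z = b′ of elements of Seg_a with indices δ+1 ≤ α_i, β_i ≤ n satisfying e_{α_i} + c_{i−1} = e_{β_i}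 + c_i for 1 ≤ i ≤ z, then (X_{α_1}⋯X_{α_z})·red(X_δ·Υ(b)) = (X_{β_1}⋯X_{β_z})·red(X_δ·Υ(b′)). -/
open MvPolynomial
open scoped Classical

noncomputable section

section AuxStatement11

variable {n : ℕ}

lemma mdeg_add' (a b : Fin n →₀ ℕ) : mdeg (a + b) = mdeg a + mdeg b := by
  simp [mdeg, Finset.sum_add_distrib]

lemma mdeg_single' (α : Fin n) : mdeg (Finsupp.single α 1) = 1 := by
  simp [mdeg, Finsupp.single_apply]

lemma O_inv {r s w : ℕ} {δ : Fin n} {m m' : Fin n →₀ ℕ}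
    (hdeg : mdeg m = mdeg m') (hk : ∀ k ≤ δ, m k = m' k) :
    m ∈ OIdeal r s w δ ↔ m' ∈ OIdeal r s w δ := by
  have hmon : IsDeltaMon δ m ↔ IsDeltaMon δ m' := by
    constructor <;> intro h k hkδ
    · rw [← hk k hkδ.le]; exact h k hkδ
    · rw [hk k hkδ.le]; exact h k hkδ
  simp only [OIdeal, Set.mem_setOf_eq, hdeg, hmon, hk δ le_rfl]

lemma Tar_inv {r s w : ℕ} {δ : Fin n} {m m' : Fin n →₀ ℕ}
    (hdeg : mdeg m = mdeg m') (hk : ∀ k ≤ δ, m k = m' k) :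
    m ∈ Tar r s w δ ↔ m' ∈ Tar r s w δ := by
  simp only [Tar, Set.mem_setOf_eq, hdeg, O_inv hdeg hk]

lemma coeff_filter_sum {R : Type*} [CommRing R] (P : MvPolynomial (Fin n) R)
    (Q : (Fin n →₀ ℕ) → Prop) (u : Fin n →₀ ℕ) :
    coeff u (∑ m ∈ P.support.filter (fun m => Q m), monomial m (coeff m P)) =
      if Q u then coeff u P else 0 := by
  rw [coeff_sum]
  simp only [coeff_monomial]
  rw [Finset.sum_ite_eq' (P.support.filter fun m => Q m) u (fun m => coeff m P)]
  simp only [Finset.mem_filter, mem_support_iff]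
  split_ifs with h1 h2 h2 <;> simp_all

/-- Key shift lemma: the bijection between the supports of `P` and `P'`. -/
lemma shift_mem {R : Type*} [CommRing R] {r s w : ℕ} {δ α β : Fin n}
    (hα : δ < α) (hβ : δ < β) {P P' : MvPolynomial (Fin n) R}
    (hPP' : X α * P = X β * P')
    (hss' : ∀ u ∈ P'.support, ∃ t ∈ OIdeal r s w δ, u = Finsupp.single δ 1 + t)
    {m : Fin n →₀ ℕ} (hm : coeff m P ≠ 0) (hmSD : m ∈ SD r s w δ) :
    coeff (Finsupp.single α 1 + m - Finsupp.single β 1) P' = coeff m P ∧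
    (Finsupp.single α 1 + m - Finsupp.single β 1) ∈ SD r s w δ ∧
    Finsupp.single α 1 + m =
      Finsupp.single β 1 + (Finsupp.single α 1 + m - Finsupp.single β 1) := by
  set u : Fin n →₀ ℕ := Finsupp.single α 1 + m with hu
  have h1 : coeff u (X β * P') = coeff m P := by
    rw [← hPP', hu, coeff_X_mul]
  have hβu : β ∈ u.support := by
    by_contra hc
    rw [coeff_X_mul', if_neg hc] at h1
    exact hm h1.symm
  have hle : Finsupp.single β 1 ≤ u := by
    rw [Finsupp.single_le_iff]
    exact Nat.one_le_iff_ne_zero.2 (Finsupp.mem_support_iff.1 hβu)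
  have hcan : Finsupp.single β 1 + (u - Finsupp.single β 1) = u := by
    rw [add_comm]; exact tsub_add_cancel_of_le hle
  have hcoeff : coeff (u - Finsupp.single β 1) P' = coeff m P := by
    rw [coeff_X_mul', if_pos hβu] at h1; exact h1
  have hdeg : mdeg (u - Finsupp.single β 1) = mdeg m := by
    have h2 : mdeg u = mdeg m + 1 := by
      rw [hu, mdeg_add', mdeg_single']; omega
    have h3 : mdeg (Finsupp.single β 1) + mdeg (u - Finsupp.single β 1) = mdeg u := by
      rw [← mdeg_add', hcan]
    rw [mdeg_single'] at h3; omega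
  have hk : ∀ k ≤ δ, (u - Finsupp.single β 1 : Fin n →₀ ℕ) k = m k := by
    intro k hkδ
    have hkα : k ≠ α := fun h => absurd (h ▸ hkδ) (not_le.2 hα)
    have hkβ : k ≠ β := fun h => absurd (h ▸ hkδ) (not_le.2 hβ)
    rw [Finsupp.tsub_apply, hu, Finsupp.add_apply,
      Finsupp.single_apply, Finsupp.single_apply, if_neg (Ne.symm hkα),
      if_neg (Ne.symm hkβ)]
    omega
  refine ⟨hcoeff, ?_, hcan.symm⟩
  obtain ⟨⟨hnO, -⟩, hdm, hd1, hd2⟩ := hmSD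
  have hsupp' : u - Finsupp.single β 1 ∈ P'.support :=
    MvPolynomial.mem_support_iff.2 (by rw [hcoeff]; exact hm)
  obtain ⟨t, ht, hut⟩ := hss' _ hsupp'
  refine ⟨⟨fun hc => hnO ((O_inv hdeg hk).1 hc), δ, t, ht, hut⟩, ?_, ?_, ?_⟩
  · intro k hkδ; rw [hk k hkδ.le]; exact hdm k hkδ
  · rw [hdeg]; exact hd1
  · rw [hdeg]; exact hd2

lemma supp_xdelta {R : Type*} [CommRing R] {r s w : ℕ} {δ : Fin n}
    {Q : MvPolynomial (Fin n) R}
    (hQ : (Q.support : Set (Fin n →₀ ℕ)) ⊆ Tar' r s w δ) :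
    ∀ u ∈ (X δ * Q).support, ∃ t ∈ OIdeal r s w δ, u = Finsupp.single δ 1 + t := by
  intro u hu
  rw [mem_support_iff, coeff_X_mul'] at hu
  by_cases hδu : δ ∈ u.support
  · rw [if_pos hδu] at hu
    refine ⟨u - Finsupp.single δ 1, (hQ (mem_support_iff.2 hu)).1.1, ?_⟩
    rw [add_comm]
    exact (tsub_add_cancel_of_le (Finsupp.single_le_iff.2
      (Nat.one_le_iff_ne_zero.2 (Finsupp.mem_support_iff.1 hδu)))).symm
  · rw [if_neg hδu] at hu; exact absurd rfl hu

/-- Core lemma: compatibility of `redFn` for polynomials with structured support. -/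
lemma red_compat {R : Type*} [CommRing R] {r s w : ℕ} {δ α β : Fin n}
    (hα : δ < α) (hβ : δ < β)
    (UpsD : (Fin n →₀ ℕ) → MvPolynomial (Fin n) R)
    (hUpsD : ∀ m ∈ SD r s w δ, ∀ m' ∈ SD r s w δ, ∀ α β : Fin n, δ < α → δ < β →
      Finsupp.single α 1 + m = Finsupp.single β 1 + m' → X α * UpsD m = X β * UpsD m')
    {P P' : MvPolynomial (Fin n) R} (hPP' : X α * P = X β * P')
    (hss : ∀ u ∈ P.support, ∃ t ∈ OIdeal r s w δ, u = Finsupp.single δ 1 + t)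
    (hss' : ∀ u ∈ P'.support, ∃ t ∈ OIdeal r s w δ, u = Finsupp.single δ 1 + t) :
    X α * redFn r s w δ UpsD P = X β * redFn r s w δ UpsD P' := by
  unfold redFn
  rw [mul_sub, mul_sub]
  congr 1
  · -- tar parts
    apply MvPolynomial.ext
    intro u
    rw [coeff_X_mul', coeff_X_mul']
    by_cases hc : coeff u (X α * P) = 0
    · have hc' : coeff u (X β * P') = 0 := by rw [← hPP']; exact hc
      rw [coeff_X_mul'] at hc hc'
      split_ifs with h1 h2 h2 <;>
        [skip; skip; skip; rfl] <;>
        simp_all [coeff_filter_sum]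
    · have hαu : α ∈ u.support := by
        by_contra h; rw [coeff_X_mul', if_neg h] at hc; exact hc rfl
      have hc2 : coeff u (X β * P') ≠ 0 := by rw [← hPP']; exact hc
      have hβu : β ∈ u.support := by
        by_contra h; rw [coeff_X_mul', if_neg h] at hc2; exact hc2 rfl
      rw [if_pos hαu, if_pos hβu, coeff_filter_sum, coeff_filter_sum]
      have hcα : coeff (u - Finsupp.single α 1) P = coeff u (X α * P) := by
        rw [coeff_X_mul', if_pos hαu]
      have hcβ : coeff (u - Finsupp.single β 1) P' = coeff u (X β * P') := by
        rw [coeff_X_mul', if_pos hβu]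
      have hdeg : mdeg (u - Finsupp.single α 1) = mdeg (u - Finsupp.single β 1) := by
        have h1 : mdeg (Finsupp.single α 1) + mdeg (u - Finsupp.single α 1) = mdeg u := by
          rw [← mdeg_add', add_comm (Finsupp.single α 1),
            tsub_add_cancel_of_le (Finsupp.single_le_iff.2
              (Nat.one_le_iff_ne_zero.2 (Finsupp.mem_support_iff.1 hαu)))]
        have h2 : mdeg (Finsupp.single β 1) + mdeg (u - Finsupp.single β 1) = mdeg u := by
          rw [← mdeg_add', add_comm (Finsupp.single β 1),
            tsub_add_cancel_of_le (Finsupp.single_le_iff.2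
              (Nat.one_le_iff_ne_zero.2 (Finsupp.mem_support_iff.1 hβu)))]
        rw [mdeg_single'] at h1 h2; omega
      have hk : ∀ k ≤ δ, (u - Finsupp.single α 1 : Fin n →₀ ℕ) k =
          (u - Finsupp.single β 1 : Fin n →₀ ℕ) k := by
        intro k hkδ
        have hkα : α ≠ k := fun h => absurd (h ▸ hkδ) (not_le.2 hα)
        have hkβ : β ≠ k := fun h => absurd (h ▸ hkδ) (not_le.2 hβ)
        rw [Finsupp.tsub_apply, Finsupp.tsub_apply, Finsupp.single_apply,
          Finsupp.single_apply, if_neg hkα, if_neg hkβ]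
      rw [Tar_inv hdeg hk, hcα, hcβ, hPP']
  · -- S_D parts
    rw [Finset.mul_sum, Finset.mul_sum]
    simp only [mul_smul_comm]
    refine Finset.sum_nbij'
      (fun m => Finsupp.single α 1 + m - Finsupp.single β 1)
      (fun m => Finsupp.single β 1 + m - Finsupp.single α 1)
      ?_ ?_ ?_ ?_ ?_
    · intro m hm
      rw [Finset.mem_filter, MvPolynomial.mem_support_iff] at hm
      obtain ⟨h1, h2, _⟩ := shift_mem hα hβ hPP' hss' hm.1 hm.2
      rw [Finset.mem_filter, MvPolynomial.mem_support_iff]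
      refine ⟨?_, h2⟩
      rw [h1]; exact hm.1
    · intro m hm
      rw [Finset.mem_filter, MvPolynomial.mem_support_iff] at hm
      obtain ⟨h1, h2, _⟩ := shift_mem hβ hα hPP'.symm hss hm.1 hm.2
      rw [Finset.mem_filter, MvPolynomial.mem_support_iff]
      refine ⟨?_, h2⟩
      rw [h1]; exact hm.1
    · intro m hm
      rw [Finset.mem_filter, MvPolynomial.mem_support_iff] at hm
      obtain ⟨-, -, h3⟩ := shift_mem hα hβ hPP' hss' hm.1 hm.2
      rw [← h3, add_comm (Finsupp.single α 1) m, add_tsub_cancel_right]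
    · intro m hm
      rw [Finset.mem_filter, MvPolynomial.mem_support_iff] at hm
      obtain ⟨-, -, h3⟩ := shift_mem hβ hα hPP'.symm hss hm.1 hm.2
      rw [← h3, add_comm (Finsupp.single β 1) m, add_tsub_cancel_right]
    · intro m hm
      rw [Finset.mem_filter, MvPolynomial.mem_support_iff] at hm
      obtain ⟨h1, h2, h3⟩ := shift_mem hα hβ hPP' hss' hm.1 hm.2
      rw [h1, hUpsD m hm.2 _ h2 α β hα hβ h3]

end AuxStatement11

/-- compatibility of reductions of `x_δ·Υ(b)` on a segment `Seg_a`. -/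
theorem statement11 (R : Type*) [CommRing R] (n r s w : ℕ) (δ : Fin n)
    (hn : 2 ≤ n) (hr : 2 ≤ r) (hrs : r < s) (hδ : (δ : ℕ) + 1 < n) (hw : w + 1 ≤ r)
    (a : ℕ) (ha : a ≤ w)
    (Ups UpsD : (Fin n →₀ ℕ) → MvPolynomial (Fin n) R)
    (hsupp : ∀ b ∈ SegA r a δ, ((Ups b).support : Set (Fin n →₀ ℕ)) ⊆ Tar' r s w δ)
    (hUps : ∀ b ∈ SegA r a δ, ∀ b' ∈ SegA r a δ, ∀ α β : Fin n, δ < α → δ < β →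
      Finsupp.single α 1 + b = Finsupp.single β 1 + b' → X α * Ups b = X β * Ups b')
    (hUpsD : ∀ m ∈ SD r s w δ, ∀ m' ∈ SD r s w δ, ∀ α β : Fin n, δ < α → δ < β →
      Finsupp.single α 1 + m = Finsupp.single β 1 + m' → X α * UpsD m = X β * UpsD m') :
    (∀ b ∈ SegA r a δ, ∀ b' ∈ SegA r a δ, ∀ α β : Fin n, δ < α → δ < β →
      Finsupp.single α 1 + b = Finsupp.single β 1 + b' →
      X α * redFn r s w δ UpsD (X δ * Ups b) =
        X β * redFn r s w δ UpsD (X δ * Ups b')) ∧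
    (∀ (z : ℕ) (c : ℕ → Fin n →₀ ℕ) (α β : ℕ → Fin n) (b b' : Fin n →₀ ℕ),
      c 0 = b → c z = b' → (∀ i ≤ z, c i ∈ SegA r a δ) →
      (∀ i, 1 ≤ i → i ≤ z → δ < α i ∧ δ < β i ∧
        Finsupp.single (α i) 1 + c (i - 1) = Finsupp.single (β i) 1 + c i) →
      (∏ i ∈ Finset.Icc 1 z, X (α i)) * redFn r s w δ UpsD (X δ * Ups b) =
        (∏ i ∈ Finset.Icc 1 z, X (β i)) * redFn r s w δ UpsD (X δ * Ups b')) := by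
  have part1 : ∀ b ∈ SegA r a δ, ∀ b' ∈ SegA r a δ, ∀ α β : Fin n, δ < α → δ < β →
      Finsupp.single α 1 + b = Finsupp.single β 1 + b' →
      X α * redFn r s w δ UpsD (X δ * Ups b) =
        X β * redFn r s w δ UpsD (X δ * Ups b') := by
    intro b hb b' hb' α β hα hβ hab
    have hPP' : X α * (X δ * Ups b) = X β * (X δ * Ups b') := by
      rw [mul_left_comm, hUps b hb b' hb' α β hα hβ hab, mul_left_comm]
    exact red_compat hα hβ UpsD hUpsD hPP'
      (supp_xdelta (hsupp b hb)) (supp_xdelta (hsupp b' hb'))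
  refine ⟨part1, ?_⟩
  intro z
  induction z with
  | zero =>
    intro c α β b b' h0 hz _ _
    simp [← h0, ← hz]
  | succ z ih =>
    intro c α β b b' h0 hz hseg hpath
    have IH := ih c α β b (c z) h0 rfl (fun i hi => hseg i (by omega))
      (fun i h1 h2 => hpath i h1 (by omega))
    obtain ⟨hα, hβ, hstep⟩ := hpath (z + 1) (by omega) le_rfl
    have step := part1 (c z) (hseg z (by omega)) (c (z + 1)) (hseg (z + 1) le_rfl)
      (α (z + 1)) (β (z + 1)) hα hβ (by simpa using hstep)
    rw [Finset.prod_Icc_succ_top (by omega), Finset.prod_Icc_succ_top (by omega), ← hz]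
    linear_combination (X (α (z + 1)) : MvPolynomial (Fin n) R) * IH +
      (∏ i ∈ Finset.Icc 1 z, X (β i) : MvPolynomial (Fin n) R) * step
end
end
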